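/- arXiv:1406.6411 — 5 statements merged into one kernel-verified Lean document; each statement's English description precedes it below -/
import Mathlib

section
/- For every countable linear order L, there exists an order-preserving embedding α : L → ℚ such that for every rational q not in the image of α, the set of elements of the image of α that are less than q either is empty or has a greatest element, and the set of elements of the image of α that are greater than q either is empty or has a least element. -/
/-!
Replace each `x : L` by the point `(x, 0)` of `L ×ₗ ℚ`, and keep a copy of the positive rationals
right after `x` exactly when `x` has an immediate successor or is the maximum, and a copy of the
negative rationals right before `x` exactly when `x` has an immediate predecessor or is the minimum.
The result is a countable dense linear order without endpoints, hence isomorphic to `ℚ`, and a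
point outside the copy of `L` lies either in the gap between `x` and its successor (so `x` is the
greatest point of `L` below it) or in the gap between `x` and its predecessor.
-/

open Set

section EmptyOrHas

variable {α β : Type*} [Preorder α] [Preorder β]

def EmptyOrHasGreatest (s : Set α) : Prop := s = ∅ ∨ ∃ m, IsGreatest s m

def EmptyOrHasLeast (s : Set α) : Prop := s = ∅ ∨ ∃ m, IsLeast s m

lemma EmptyOrHasGreatest.image {f : α → β} (hf : Monotone f) {s : Set α}
    (h : EmptyOrHasGreatest s) : EmptyOrHasGreatest (f '' s) := by
  rcases h with rfl | ⟨m, hm⟩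
  · exact Or.inl (image_empty f)
  · exact Or.inr ⟨f m, hf.map_isGreatest hm⟩

lemma EmptyOrHasLeast.image {f : α → β} (hf : Monotone f) {s : Set α}
    (h : EmptyOrHasLeast s) : EmptyOrHasLeast (f '' s) := by
  rcases h with rfl | ⟨m, hm⟩
  · exact Or.inl (image_empty f)
  · exact Or.inr ⟨f m, hf.map_isLeast hm⟩

end EmptyOrHas

variable (L : Type*) [LinearOrder L]

def jumpFill : Set (L ×ₗ ℚ) :=
  {p | (ofLex p).2 = 0 ∨ (0 < (ofLex p).2 ∧ EmptyOrHasLeast (Ioi (ofLex p).1)) ∨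
    ((ofLex p).2 < 0 ∧ EmptyOrHasGreatest (Iio (ofLex p).1))}

namespace jumpFill

variable {L}

lemma toLex_mem_iff {x : L} {r : ℚ} : toLex (x, r) ∈ jumpFill L ↔
    r = 0 ∨ (0 < r ∧ EmptyOrHasLeast (Ioi x)) ∨ (r < 0 ∧ EmptyOrHasGreatest (Iio x)) :=
  Iff.rfl

lemma toLex_mem_of_le_of_le {x : L} {r t c : ℚ} (hr : toLex (x, r) ∈ jumpFill L)
    (ht : toLex (x, t) ∈ jumpFill L) (hrc : r ≤ c) (hct : c ≤ t) : toLex (x, c) ∈ jumpFill L := by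
  rw [toLex_mem_iff] at *
  rcases lt_trichotomy c 0 with hc | hc | hc
  · rcases hr with hr | hr | hr
    · linarith
    · linarith [hr.1]
    · exact Or.inr (Or.inr ⟨hc, hr.2⟩)
  · exact Or.inl hc
  · rcases ht with ht | ht | ht
    · linarith
    · exact Or.inr (Or.inl ⟨hc, ht.2⟩)
    · linarith [ht.1]

lemma lt_iff {x y : L} {r t : ℚ} {hp hq} :
    (⟨toLex (x, r), hp⟩ : jumpFill L) < ⟨toLex (y, t), hq⟩ ↔ x < y ∨ x = y ∧ r < t :=
  Subtype.mk_lt_mk.trans Prod.Lex.toLex_lt_toLex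

instance [Countable L] : Countable (jumpFill L) :=
  haveI : Countable (L ×ₗ ℚ) := inferInstanceAs (Countable (L × ℚ))
  inferInstance

instance [Nonempty L] : Nonempty (jumpFill L) :=
  ⟨⟨toLex (Classical.arbitrary L, 0), Or.inl rfl⟩⟩

instance : NoMaxOrder (jumpFill L) where
  exists_gt := by
    rintro ⟨⟨x, r⟩, hp⟩
    by_cases hx : EmptyOrHasLeast (Ioi x)
    · refine ⟨⟨toLex (x, |r| + 1), toLex_mem_iff.2 (Or.inr (Or.inl ⟨by positivity, hx⟩))⟩,
        lt_iff.2 (Or.inr ⟨rfl, by linarith [le_abs_self r]⟩)⟩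
    · obtain ⟨y, hy⟩ := nonempty_iff_ne_empty.2 fun h => hx (Or.inl h)
      exact ⟨⟨toLex (y, 0), Or.inl rfl⟩, lt_iff.2 (Or.inl hy)⟩

instance : NoMinOrder (jumpFill L) where
  exists_lt := by
    rintro ⟨⟨x, r⟩, hp⟩
    by_cases hx : EmptyOrHasGreatest (Iio x)
    · refine ⟨⟨toLex (x, -|r| - 1),
        toLex_mem_iff.2 (Or.inr (Or.inr ⟨by linarith [abs_nonneg r], hx⟩))⟩,
        lt_iff.2 (Or.inr ⟨rfl, by linarith [neg_abs_le r]⟩)⟩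
    · obtain ⟨y, hy⟩ := nonempty_iff_ne_empty.2 fun h => hx (Or.inl h)
      exact ⟨⟨toLex (y, 0), Or.inl rfl⟩, lt_iff.2 (Or.inl hy)⟩

instance : DenselyOrdered (jumpFill L) where
  dense := by
    rintro ⟨⟨x, r⟩, hp⟩ ⟨⟨y, t⟩, hq⟩ hlt
    rcases lt_iff.1 hlt with hxy | ⟨rfl, hrt⟩
    · by_cases hz : ∃ z, x < z ∧ z < y
      · obtain ⟨z, hxz, hzy⟩ := hz
        exact ⟨⟨toLex (z, 0), Or.inl rfl⟩, lt_iff.2 (Or.inl hxz), lt_iff.2 (Or.inl hzy)⟩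
      · push Not at hz
        have hy : IsLeast (Ioi x) y := ⟨hxy, fun z hz' => hz z hz'⟩
        exact ⟨⟨toLex (x, |r| + 1), toLex_mem_iff.2 (Or.inr (Or.inl ⟨by positivity, Or.inr ⟨y, hy⟩⟩))⟩,
          lt_iff.2 (Or.inr ⟨rfl, by linarith [le_abs_self r]⟩), lt_iff.2 (Or.inl hxy)⟩
    · exact ⟨⟨toLex (x, (r + t) / 2), toLex_mem_of_le_of_le hp hq (by linarith) (by linarith)⟩,
        lt_iff.2 (Or.inr ⟨rfl, by linarith⟩), lt_iff.2 (Or.inr ⟨rfl, by linarith⟩)⟩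

variable (L) in
def embed : L ↪o jumpFill L :=
  OrderEmbedding.ofStrictMono (fun x => ⟨toLex (x, 0), Or.inl rfl⟩)
    fun _ _ h => lt_iff.2 (Or.inl h)

lemma embed_lt_iff {x y : L} {r : ℚ} {h} :
    embed L y < ⟨toLex (x, r), h⟩ ↔ y < x ∨ y = x ∧ 0 < r :=
  lt_iff

lemma lt_embed_iff {x y : L} {r : ℚ} {h} :
    ⟨toLex (x, r), h⟩ < embed L y ↔ x < y ∨ x = y ∧ r < 0 :=
  lt_iff

lemma emptyOrHasGreatest_embed_lt_and_emptyOrHasLeast_lt_embed {m : jumpFill L}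
    (hm : m ∉ range (embed L)) :
    EmptyOrHasGreatest {y | embed L y < m} ∧ EmptyOrHasLeast {y | m < embed L y} := by
  obtain ⟨p, hm'⟩ := m
  obtain ⟨⟨x, r⟩, rfl⟩ := toLex.surjective p
  rcases toLex_mem_iff.1 hm' with hr | ⟨hr, hsucc⟩ | ⟨hr, hpred⟩
  · exact absurd ⟨x, Subtype.ext (congrArg (toLex ∘ Prod.mk x) hr.symm)⟩ hm
  · have hbelow : {y | embed L y < ⟨toLex (x, r), hm'⟩} = Iic x := by
      ext y; simp [embed_lt_iff, hr, le_iff_lt_or_eq]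
    have habove : {y | ⟨toLex (x, r), hm'⟩ < embed L y} = Ioi x := by
      ext y; simp [lt_embed_iff, hr.not_gt]
    exact ⟨hbelow ▸ Or.inr ⟨x, isGreatest_Iic⟩, habove ▸ hsucc⟩
  · have hbelow : {y | embed L y < ⟨toLex (x, r), hm'⟩} = Iio x := by
      ext y; simp [embed_lt_iff, hr.not_gt]
    have habove : {y | ⟨toLex (x, r), hm'⟩ < embed L y} = Ici x := by
      ext y; simp [lt_embed_iff, hr, le_iff_lt_or_eq]
    exact ⟨hbelow ▸ hpred, habove ▸ Or.inr ⟨x, isLeast_Ici⟩⟩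

end jumpFill

/-- For every countable linear order `L` there is an order embedding into `ℚ` such that
every rational outside the image has a greatest image-point below it (if any) and a least
image-point above it (if any). -/
theorem stmt0 (L : Type) [LinearOrder L] [Countable L] :
    ∃ α : L ↪o ℚ, ∀ q : ℚ, q ∉ Set.range α →
      ({p ∈ Set.range ⇑α | p < q} = ∅ ∨
        ∃ m ∈ {p ∈ Set.range ⇑α | p < q}, ∀ x ∈ {p ∈ Set.range ⇑α | p < q}, x ≤ m) ∧
      ({p ∈ Set.range ⇑α | q < p} = ∅ ∨
        ∃ m ∈ {p ∈ Set.range ⇑α | q < p}, ∀ x ∈ {p ∈ Set.range ⇑α | q < p}, m ≤ x) := by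
  suffices h : ∃ α : L ↪o ℚ, ∀ q ∉ range α,
      EmptyOrHasGreatest (α ⁻¹' Iio q) ∧ EmptyOrHasLeast (α ⁻¹' Ioi q) by
    obtain ⟨α, hα⟩ := h
    refine ⟨α, fun q hq => ?_⟩
    have := And.imp (·.image α.monotone) (·.image α.monotone) (hα q hq)
    rwa [image_preimage_eq_range_inter, image_preimage_eq_range_inter] at this
  rcases isEmpty_or_nonempty L with hL | hL
  · exact ⟨OrderEmbedding.ofIsEmpty, fun q _ =>
      ⟨Or.inl (eq_empty_of_isEmpty _), Or.inl (eq_empty_of_isEmpty _)⟩⟩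
  obtain ⟨e⟩ := Order.iso_of_countable_dense (jumpFill L) ℚ
  refine ⟨(jumpFill.embed L).trans e.toOrderEmbedding, fun q hq => ?_⟩
  have hq' : e.symm q ∉ range (jumpFill.embed L) := by
    rintro ⟨x, hx⟩
    exact hq ⟨x, by simp [hx]⟩
  simpa [preimage, ← e.lt_symm_apply, ← e.symm_apply_lt] using
    jumpFill.emptyOrHasGreatest_embed_lt_and_emptyOrHasLeast_lt_embed hq'
end

section
/- Let G = ∞·K_n with n finite, and let φ, ψ ∈ Aut(G). Suppose that for every finite k and every conjugacy class t of S_n, φ and ψ have the same number of k-cycles of copies of K_n with twist type t, and that φ and ψ have the same number of infinite cycles of copies of K_n. Then φ and ψ are conjugate in Aut(G). -/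
/-!
An automorphism of `∞·Kₙ` is a permutation `Φ` of `ℕ × Fin n` lying over the permutation `σ` of
the copies. Fix a copy `b` in each cycle of `σ`, let `k` be the length of the cycle (`0` if it is
infinite) and `π` the twist at `b`, i.e. `Φ ^ k` acts on the copy `b` as `π`. Every vertex is some
`Φ ^ m (b, a)`, and `Φ ^ m (b, a) = Φ ^ m' (b, a')` exactly when `m - m' = k * s` and
`π ^ s a = a'`. The counting hypotheses give a bijection between the cycles of `φ` and of `ψ`
preserving length and twist class; choosing `κ` conjugating the twists at matched representatives
`b ↦ b'`, the map `Φ ^ m (b, a) ↦ Ψ ^ m (b', κ a)` is then well defined, bijective, preserves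
copies and conjugates `φ` to `ψ`.
-/

/-- The graph `∞·Kₙ` on vertex set `ℕ × Fin n`. -/
def inftyKn (n : ℕ) : SimpleGraph (ℕ × Fin n) where
  Adj p q := p.1 = q.1 ∧ p.2 ≠ q.2
  symm := by constructor; intro p q h; exact ⟨h.1.symm, h.2.symm⟩
  loopless := by constructor; intro p h; exact h.2 rfl

/-- The set of cycles (orbits) of a permutation of ℕ (indexing the copies of `Kₙ`). -/
def cycles (σ : Equiv.Perm ℕ) : Set (Set ℕ) :=
  Set.range fun i => {j | σ.SameCycle i j}

/-- The cycle `O` of copies is finite of length `k` and has twist type the conjugacy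
class of `t`: restricting `φ^k` to a copy in `O` gives a permutation conjugate to `t`. -/
def hasTwistType (n : ℕ) (φ : inftyKn n ≃g inftyKn n) (O : Set ℕ) (k : ℕ)
    (t : Equiv.Perm (Fin n)) : Prop :=
  Nat.card O = k ∧ O.Finite ∧
    ∃ i ∈ O, ∃ π : Equiv.Perm (Fin n),
      (∀ a : Fin n, (⇑φ)^[k] (i, a) = (i, π a)) ∧ IsConj π t

universe u

open Equiv Function MulAction Cardinal

theorem Function.Surjective.exists_equiv_of_ker_eq {α X Y : Type*} {f : α → X} {g : α → Y}
    (hf : Surjective f) (hg : Surjective g) (hker : ∀ x y, f x = f y ↔ g x = g y) :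
    ∃ δ : X ≃ Y, ∀ x, δ (f x) = g x := by
  have hδ (x : α) : g (surjInv hf (f x)) = g x := (hker _ _).mp (surjInv_eq hf _)
  refine ⟨Equiv.ofBijective (g ∘ surjInv hf) ⟨fun p q h => ?_, fun y => ?_⟩, hδ⟩
  · rw [← surjInv_eq hf p, ← surjInv_eq hf q]
    exact (hker _ _).mpr h
  · obtain ⟨x, rfl⟩ := hg y
    exact ⟨f x, hδ x⟩

theorem exists_equiv_comp_eq_of_mk_fiber_eq {α β : Type u} {γ : Type*} (f : α → γ) (g : β → γ)
    (h : ∀ y, #{a // f a = y} = #{b // g b = y}) : ∃ e : α ≃ β, ∀ a, g (e a) = f a :=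
  ⟨Equiv.ofFiberEquiv fun y => (Cardinal.eq.mp (h y)).some, Equiv.ofFiberEquiv_map _⟩

theorem Function.Semiconj.perm_zpow {α β : Type*} {f : α → β} {g : Perm α} {h : Perm β}
    (H : Semiconj f g h) (m : ℤ) : Semiconj f ⇑(g ^ m) ⇑(h ^ m) := by
  have Hpow (k : ℕ) : Semiconj f ⇑(g ^ k) ⇑(h ^ k) := by
    simpa only [Perm.coe_pow] using H.iterate_right k
  obtain ⟨k, rfl | rfl⟩ := m.eq_nat_or_neg
  · simpa only [zpow_natCast] using Hpow k
  · simp only [zpow_neg, zpow_natCast]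
    exact (Hpow k).inverses_right (g ^ k).apply_symm_apply (h ^ k).symm_apply_apply

theorem Equiv.Perm.sameCycle_iff_mem_orbit {ι : Type*} {σ : Perm ι} {i j : ι} :
    σ.SameCycle i j ↔ j ∈ orbit (Subgroup.zpowers σ) i := by
  simp [Perm.SameCycle, mem_orbit_iff, Subgroup.exists_zpowers, Subgroup.smul_def,
    Perm.smul_def]

theorem Equiv.Perm.card_setOf_sameCycle {ι : Type*} (σ : Perm ι) (i : ι) :
    Nat.card {j | σ.SameCycle i j} = period σ i := by
  have hset : {j | σ.SameCycle i j} = orbit (Subgroup.zpowers σ) i :=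
    Set.ext fun _ => Perm.sameCycle_iff_mem_orbit
  rw [hset, Nat.card_congr (orbitZPowersEquiv σ i), Nat.card_zmod, period_eq_minimalPeriod]

theorem Equiv.Perm.SameCycle.period_eq {ι : Type*} {σ : Perm ι} {i j : ι}
    (h : σ.SameCycle i j) : period σ i = period σ j := by
  have hset : {k | σ.SameCycle i k} = {k | σ.SameCycle j k} :=
    Set.ext fun _ => ⟨h.symm.trans, h.trans⟩
  rw [← Perm.card_setOf_sameCycle, hset, Perm.card_setOf_sameCycle]

theorem Equiv.Perm.zpow_apply_eq_zpow_apply_iff {ι : Type*} (σ : Perm ι) (i : ι) (m m' : ℤ) :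
    (σ ^ m) i = (σ ^ m') i ↔ (period σ i : ℤ) ∣ m - m' := by
  rw [← zpow_smul_eq_iff_period_dvd, Perm.smul_def, sub_eq_neg_add, zpow_add, Perm.mul_apply,
    zpow_neg, Perm.inv_eq_iff_eq]

theorem Equiv.Perm.period_eq_zero_iff_infinite {ι : Type*} {σ : Perm ι} {i : ι} :
    period σ i = 0 ↔ {j | σ.SameCycle i j}.Infinite := by
  have : Nonempty {j | σ.SameCycle i j} := ⟨⟨i, Perm.SameCycle.refl σ i⟩⟩
  rw [← Perm.card_setOf_sameCycle, Nat.card_eq_zero, ← Set.infinite_coe_iff]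
  simp [not_isEmpty_of_nonempty]

namespace FiberedPerm

variable {ι F : Type*} {σ : Perm ι} {Φ : Perm (ι × F)}

theorem exists_perm_fiber (hΦ : Semiconj Prod.fst Φ σ) (b : ι) :
    ∃ π : Perm F, ∀ a, Φ (b, a) = (σ b, π a) := by
  have hinv : Semiconj Prod.fst Φ.symm σ.symm :=
    hΦ.inverses_right Φ.apply_symm_apply σ.symm_apply_apply
  have hfwd (a : F) : Φ (b, a) = (σ b, (Φ (b, a)).2) := Prod.ext (hΦ _) rfl
  have hbwd (a : F) : Φ.symm (σ b, a) = (b, (Φ.symm (σ b, a)).2) :=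
    Prod.ext ((hinv _).trans (σ.symm_apply_apply b)) rfl
  refine ⟨⟨fun a => (Φ (b, a)).2, fun a => (Φ.symm (σ b, a)).2, fun a => ?_, fun a => ?_⟩,
    hfwd⟩
  · simp only [← hfwd, Equiv.symm_apply_apply]
  · simp only [← hbwd, Equiv.apply_symm_apply]

def IsTwist (σ : Perm ι) (Φ : Perm (ι × F)) (b : ι) (π : Perm F) : Prop :=
  Semiconj (Prod.mk b) π ⇑(Φ ^ (period σ b : ℤ))

theorem exists_isTwist (hΦ : Semiconj Prod.fst Φ σ) (b : ι) : ∃ π, IsTwist σ Φ b π := by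
  obtain ⟨π, hπ⟩ := exists_perm_fiber (hΦ.perm_zpow (period σ b)) b
  refine ⟨π, fun a => ?_⟩
  rw [hπ, zpow_natCast]
  exact Prod.ext (pow_period_smul σ b).symm rfl

theorem IsTwist.zpow_mul_apply {b : ι} {π : Perm F} (hπ : IsTwist σ Φ b π) (s : ℤ) (a : F) :
    (Φ ^ ((period σ b : ℤ) * s)) (b, a) = (b, (π ^ s) a) := by
  rw [zpow_mul]
  exact (hπ.perm_zpow s a).symm

theorem IsTwist.unique {b : ι} {π π' : Perm F} (hπ : IsTwist σ Φ b π)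
    (hπ' : IsTwist σ Φ b π') : π = π' :=
  Perm.ext fun a => congrArg Prod.snd ((hπ a).trans (hπ' a).symm)

theorem isTwist_one_of_period_eq_zero {b : ι} (hb : period σ b = 0) : IsTwist σ Φ b 1 := by
  intro a
  simp [hb]

theorem IsTwist.isConj_of_sameCycle (hΦ : Semiconj Prod.fst Φ σ) {i j : ι} {π π' : Perm F}
    (hij : σ.SameCycle i j) (hπ : IsTwist σ Φ i π) (hπ' : IsTwist σ Φ j π') : IsConj π π' := by
  have hperiod := hij.period_eq
  obtain ⟨m, hm⟩ := hij
  obtain ⟨ρ, hρ⟩ := exists_perm_fiber (hΦ.perm_zpow m) i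
  have hcomm (a : F) : ρ (π a) = π' (ρ a) := by
    have h : (Φ ^ m) ((Φ ^ (period σ i : ℤ)) (i, a)) =
        (Φ ^ (period σ i : ℤ)) ((Φ ^ m) (i, a)) := by
      rw [← Perm.mul_apply, ← Perm.mul_apply, zpow_mul_comm]
    rw [← hπ a, hρ, hρ, hm, hperiod, ← hπ' (ρ a)] at h
    exact congrArg Prod.snd h
  rw [isConj_iff]
  exact ⟨ρ, mul_inv_eq_iff_eq_mul.mpr (Perm.ext hcomm)⟩

noncomputable def twistClass (hΦ : Semiconj Prod.fst Φ σ) (b : ι) : ConjClasses (Perm F) :=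
  ConjClasses.mk (exists_isTwist hΦ b).choose

theorem twistClass_eq (hΦ : Semiconj Prod.fst Φ σ) {b : ι} {π : Perm F}
    (hπ : IsTwist σ Φ b π) : twistClass hΦ b = ConjClasses.mk π := by
  rw [twistClass, (exists_isTwist hΦ b).choose_spec.unique hπ]

theorem twistClass_eq_of_sameCycle (hΦ : Semiconj Prod.fst Φ σ) {i j : ι}
    (hij : σ.SameCycle i j) : twistClass hΦ i = twistClass hΦ j :=
  ConjClasses.mk_eq_mk_iff_isConj.mpr <|
    (exists_isTwist hΦ i).choose_spec.isConj_of_sameCycle hΦ hij (exists_isTwist hΦ j).choose_spec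

-- An infinite cycle has `period σ b = 0`, hence type `(0, [1])`, unlike every finite cycle.
noncomputable def twistType (hΦ : Semiconj Prod.fst Φ σ) (b : ι) : ℕ × ConjClasses (Perm F) :=
  (period σ b, twistClass hΦ b)

theorem twistType_eq_zero_iff (hΦ : Semiconj Prod.fst Φ σ) (i : ι)
    (cls : ConjClasses (Perm F)) :
    twistType hΦ i = (0, cls) ↔ {j | σ.SameCycle i j}.Infinite ∧ ConjClasses.mk 1 = cls := by
  rw [twistType, Prod.mk.injEq, ← Perm.period_eq_zero_iff_infinite]
  refine and_congr_right fun h => ?_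
  rw [twistClass_eq hΦ (isTwist_one_of_period_eq_zero h)]

variable {C : Type*} {b : C → ι}

def IsCycleTransversal (σ : Perm ι) (b : C → ι) : Prop :=
  (∀ i, ∃ c, σ.SameCycle (b c) i) ∧ ∀ c c', σ.SameCycle (b c) (b c') → c = c'

theorem IsCycleTransversal.comp_equiv {C' : Type*} (hb : IsCycleTransversal σ b)
    (e : C' ≃ C) : IsCycleTransversal σ (b ∘ e) := by
  refine ⟨fun i => ?_, fun c c' h => e.injective (hb.2 _ _ h)⟩
  obtain ⟨c, hc⟩ := hb.1 i
  exact ⟨e.symm c, by simpa using hc⟩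

def orbitParam (Φ : Perm (ι × F)) (b : C → ι) (x : C × ℤ × F) : ι × F :=
  (Φ ^ x.2.1) (b x.1, x.2.2)

theorem orbitParam_fst (hΦ : Semiconj Prod.fst Φ σ) (x : C × ℤ × F) :
    (orbitParam Φ b x).1 = (σ ^ x.2.1) (b x.1) :=
  hΦ.perm_zpow _ _

theorem orbitParam_add_one (c : C) (m : ℤ) (a : F) :
    orbitParam Φ b (c, m + 1, a) = Φ (orbitParam Φ b (c, m, a)) := by
  rw [orbitParam, orbitParam, add_comm, zpow_add, zpow_one, Perm.mul_apply]

theorem orbitParam_surjective (hΦ : Semiconj Prod.fst Φ σ) (hb : IsCycleTransversal σ b) :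
    Surjective (orbitParam Φ b) := by
  rintro ⟨i, a⟩
  obtain ⟨c, m, hm⟩ := hb.1 i
  obtain ⟨ρ, hρ⟩ := exists_perm_fiber (hΦ.perm_zpow m) (b c)
  exact ⟨(c, m, ρ.symm a), by simp [orbitParam, hρ, hm]⟩

theorem orbitParam_fst_eq_iff (hΦ : Semiconj Prod.fst Φ σ) (hb : IsCycleTransversal σ b)
    {c c' : C} {m m' : ℤ} {a a' : F} :
    (orbitParam Φ b (c, m, a)).1 = (orbitParam Φ b (c', m', a')).1 ↔
      c = c' ∧ (period σ (b c) : ℤ) ∣ m - m' := by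
  simp only [orbitParam_fst hΦ]
  constructor
  · intro h
    have hcc' : σ.SameCycle (b c) (b c') := by
      rw [← Perm.sameCycle_zpow_right (n := m'), ← h, Perm.sameCycle_zpow_right]
    obtain rfl := hb.2 _ _ hcc'
    exact ⟨rfl, (Perm.zpow_apply_eq_zpow_apply_iff σ _ m m').mp h⟩
  · rintro ⟨rfl, h⟩
    exact (Perm.zpow_apply_eq_zpow_apply_iff σ _ m m').mpr h

theorem orbitParam_eq_iff (hΦ : Semiconj Prod.fst Φ σ) (hb : IsCycleTransversal σ b)
    {π : C → Perm F} (hπ : ∀ c, IsTwist σ Φ (b c) (π c)) {c c' : C} {m m' : ℤ} {a a' : F} :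
    orbitParam Φ b (c, m, a) = orbitParam Φ b (c', m', a') ↔
      c = c' ∧ ∃ s : ℤ, m = m' + period σ (b c) * s ∧ (π c ^ s) a = a' := by
  constructor
  · intro h
    obtain ⟨rfl, s, hs⟩ := (orbitParam_fst_eq_iff hΦ hb).mp (congrArg Prod.fst h)
    rw [orbitParam, orbitParam, eq_add_of_sub_eq' hs, zpow_add, Perm.mul_apply,
      (hπ c).zpow_mul_apply] at h
    exact ⟨rfl, s, eq_add_of_sub_eq' hs, congrArg Prod.snd ((Φ ^ m').injective h)⟩
  · rintro ⟨rfl, s, rfl, rfl⟩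
    rw [orbitParam, orbitParam, zpow_add, Perm.mul_apply, (hπ c).zpow_mul_apply]

variable {τ : Perm ι} {Ψ : Perm (ι × F)}

theorem exists_conj_of_twistType_eq (hΦ : Semiconj Prod.fst Φ σ) (hΨ : Semiconj Prod.fst Ψ τ)
    {b' : C → ι} (hb : IsCycleTransversal σ b) (hb' : IsCycleTransversal τ b')
    (htype : ∀ c, twistType hΨ (b' c) = twistType hΦ (b c)) :
    ∃ δ : ι × F ≃ ι × F, (∀ v, δ (Φ v) = Ψ (δ v)) ∧ ∀ p q, (δ p).1 = (δ q).1 ↔ p.1 = q.1 := by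
  choose π hπ using fun c => exists_isTwist hΦ (b c)
  choose π' hπ' using fun c => exists_isTwist hΨ (b' c)
  have hperiod (c : C) : period τ (b' c) = period σ (b c) := congrArg Prod.fst (htype c)
  have hconj (c : C) : IsConj (π c) (π' c) := by
    have h := congrArg Prod.snd (htype c)
    rwa [twistType, twistType, twistClass_eq hΦ (hπ c), twistClass_eq hΨ (hπ' c), eq_comm,
      ConjClasses.mk_eq_mk_iff_isConj] at h
  choose κ hκ using fun c => isConj_iff.mp (hconj c)
  have hrel (c : C) (s : ℤ) (a a' : F) : (π' c ^ s) (κ c a) = κ c a' ↔ (π c ^ s) a = a' := by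
    rw [← hκ c, conj_zpow]
    simp [Perm.mul_apply]
  -- `δ` will send `Φ ^ m (b c, a)` to `Ψ ^ m (b' c, κ c a)`.
  let g (x : C × ℤ × F) : ι × F := orbitParam Ψ b' (x.1, x.2.1, κ x.1 x.2.2)
  have hf := orbitParam_surjective hΦ hb
  have hg : Surjective g := by
    intro v
    obtain ⟨⟨c, m, a⟩, rfl⟩ := orbitParam_surjective hΨ hb' v
    exact ⟨(c, m, (κ c).symm a), by simp [g]⟩
  obtain ⟨δ, hδ⟩ := hf.exists_equiv_of_ker_eq hg <| by
    rintro ⟨c, m, a⟩ ⟨c', m', a'⟩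
    rw [orbitParam_eq_iff hΦ hb hπ, orbitParam_eq_iff hΨ hb' hπ']
    refine and_congr_right fun hc => ?_
    subst hc
    simp only [hperiod, hrel]
  refine ⟨δ, fun v => ?_, fun p q => ?_⟩
  · obtain ⟨⟨c, m, a⟩, rfl⟩ := hf v
    rw [← orbitParam_add_one, hδ, hδ]
    exact orbitParam_add_one ..
  · obtain ⟨⟨c, m, a⟩, rfl⟩ := hf p
    obtain ⟨⟨c', m', a'⟩, rfl⟩ := hf q
    rw [hδ, hδ]
    simp only [g, orbitParam_fst_eq_iff hΦ hb, orbitParam_fst_eq_iff hΨ hb', hperiod]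

end FiberedPerm

open FiberedPerm

noncomputable def cycleRep {σ : Perm ℕ} (O : {O // O ∈ cycles σ}) : ℕ :=
  O.2.choose

theorem setOf_sameCycle_cycleRep {σ : Perm ℕ} (O : {O // O ∈ cycles σ}) :
    {j | σ.SameCycle (cycleRep O) j} = O.1 :=
  O.2.choose_spec

theorem isCycleTransversal_cycleRep (σ : Perm ℕ) :
    IsCycleTransversal σ (cycleRep (σ := σ)) := by
  refine ⟨fun i => ⟨⟨_, i, rfl⟩, ?_⟩, fun c c' h => Subtype.ext ?_⟩
  · exact (Set.ext_iff.mp (setOf_sameCycle_cycleRep ⟨_, i, rfl⟩) i).mpr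
      (Perm.SameCycle.refl σ i)
  · rw [← setOf_sameCycle_cycleRep c, ← setOf_sameCycle_cycleRep c']
    exact Set.ext fun j => ⟨h.symm.trans, h.trans⟩

theorem mk_cycles_fiber {σ : Perm ℕ} {γ : Type*} (f : ℕ → γ) (y : γ) (P : Set ℕ → Prop)
    (hP : ∀ i, f i = y ↔ P {j | σ.SameCycle i j}) :
    #{c : {O // O ∈ cycles σ} // f (cycleRep c) = y} = #{O : Set ℕ // O ∈ cycles σ ∧ P O} :=
  Cardinal.mk_congr <|
    (Equiv.subtypeEquivRight fun c => by rw [hP, setOf_sameCycle_cycleRep]).trans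
      (Equiv.subtypeSubtypeEquivSubtypeInter _ _)

theorem hasTwistType_iff {n : ℕ} {φ : inftyKn n ≃g inftyKn n} {σ : Perm ℕ}
    (hΦ : Semiconj Prod.fst φ.toEquiv σ) (i : ℕ) {k : ℕ} (hk : 0 < k) (t : Perm (Fin n)) :
    hasTwistType n φ {j | σ.SameCycle i j} k t ↔ twistType hΦ i = (k, ConjClasses.mk t) := by
  have hiter (j : ℕ) (π : Perm (Fin n)) :
      IsTwist σ φ.toEquiv j π ↔ ∀ a, (⇑φ)^[period σ j] (j, a) = (j, π a) := by
    simp [IsTwist, Semiconj, eq_comm, zpow_natCast, Perm.coe_pow]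
  simp only [hasTwistType, twistType, Prod.mk.injEq, Perm.card_setOf_sameCycle]
  constructor
  · rintro ⟨rfl, -, j, hj, π, hπ, hconj⟩
    refine ⟨rfl, ?_⟩
    rw [twistClass_eq_of_sameCycle hΦ hj,
      twistClass_eq hΦ ((hiter j π).mpr (hj.period_eq ▸ hπ)), ConjClasses.mk_eq_mk_iff_isConj]
    exact hconj
  · rintro ⟨rfl, hcls⟩
    obtain ⟨π, hπ⟩ := exists_isTwist hΦ i
    have : Finite {j | σ.SameCycle i j} :=
      Nat.finite_of_card_ne_zero (by rw [Perm.card_setOf_sameCycle]; exact hk.ne')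
    refine ⟨rfl, Set.toFinite _, i, Perm.SameCycle.refl σ i, π, (hiter i π).mp hπ, ?_⟩
    rwa [twistClass_eq hΦ hπ, ConjClasses.mk_eq_mk_iff_isConj] at hcls

theorem exists_cycles_equiv_twistType_eq {n : ℕ} {φ ψ : inftyKn n ≃g inftyKn n}
    {σφ σψ : Perm ℕ} (hΦ : Semiconj Prod.fst φ.toEquiv σφ)
    (hΨ : Semiconj Prod.fst ψ.toEquiv σψ)
    (hfin : ∀ (k : ℕ), 0 < k → ∀ t : Perm (Fin n),
      #{O : Set ℕ // O ∈ cycles σφ ∧ hasTwistType n φ O k t} =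
      #{O : Set ℕ // O ∈ cycles σψ ∧ hasTwistType n ψ O k t})
    (hinf : #{O : Set ℕ // O ∈ cycles σφ ∧ O.Infinite} =
      #{O : Set ℕ // O ∈ cycles σψ ∧ O.Infinite}) :
    ∃ e : {O // O ∈ cycles σφ} ≃ {O // O ∈ cycles σψ},
      ∀ c, twistType hΨ (cycleRep (e c)) = twistType hΦ (cycleRep c) := by
  refine exists_equiv_comp_eq_of_mk_fiber_eq (fun c => twistType hΦ (cycleRep c))
    (fun c => twistType hΨ (cycleRep c)) fun ⟨k, cls⟩ => ?_
  rcases k.eq_zero_or_pos with rfl | hk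
  · rw [mk_cycles_fiber _ _ (fun O => O.Infinite ∧ _) (twistType_eq_zero_iff hΦ · cls),
      mk_cycles_fiber _ _ (fun O => O.Infinite ∧ _) (twistType_eq_zero_iff hΨ · cls)]
    by_cases h : ConjClasses.mk 1 = cls
    · simpa only [h, and_true] using hinf
    · simp only [h, and_false]
  · obtain ⟨t, rfl⟩ := ConjClasses.mk_surjective cls
    rw [mk_cycles_fiber _ _ (hasTwistType n φ · k t) fun i => (hasTwistType_iff hΦ i hk t).symm,
      mk_cycles_fiber _ _ (hasTwistType n ψ · k t) fun i => (hasTwistType_iff hΨ i hk t).symm]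
    exact hfin k hk t

theorem inftyKn_adj_iff {n : ℕ} {p q : ℕ × Fin n} :
    (inftyKn n).Adj p q ↔ p.1 = q.1 ∧ p ≠ q := by
  simp only [inftyKn, ne_eq, Prod.ext_iff]
  tauto

def inftyKnIsoOfFst {n : ℕ} (δ : ℕ × Fin n ≃ ℕ × Fin n)
    (h : ∀ p q, (δ p).1 = (δ q).1 ↔ p.1 = q.1) : inftyKn n ≃g inftyKn n :=
  ⟨δ, by simp [inftyKn_adj_iff, h]⟩

theorem stmt10_general (n : ℕ) (φ ψ : inftyKn n ≃g inftyKn n)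
    (σφ σψ : Equiv.Perm ℕ)
    (hφ : ∀ (i : ℕ) (a : Fin n), (φ (i, a)).1 = σφ i)
    (hψ : ∀ (i : ℕ) (a : Fin n), (ψ (i, a)).1 = σψ i)
    (hfin : ∀ (k : ℕ), 0 < k → ∀ t : Equiv.Perm (Fin n),
      Cardinal.mk {O : Set ℕ // O ∈ cycles σφ ∧ hasTwistType n φ O k t} =
      Cardinal.mk {O : Set ℕ // O ∈ cycles σψ ∧ hasTwistType n ψ O k t})
    (hinf : Cardinal.mk {O : Set ℕ // O ∈ cycles σφ ∧ O.Infinite} =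
      Cardinal.mk {O : Set ℕ // O ∈ cycles σψ ∧ O.Infinite}) :
    ∃ δ : inftyKn n ≃g inftyKn n, ∀ v, δ (φ v) = ψ (δ v) := by
  have hΦ : Semiconj Prod.fst φ.toEquiv σφ := fun v => hφ v.1 v.2
  have hΨ : Semiconj Prod.fst ψ.toEquiv σψ := fun v => hψ v.1 v.2
  obtain ⟨e, he⟩ := exists_cycles_equiv_twistType_eq hΦ hΨ hfin hinf
  obtain ⟨δ, hδ, hfst⟩ := exists_conj_of_twistType_eq hΦ hΨ (isCycleTransversal_cycleRep σφ)
    ((isCycleTransversal_cycleRep σψ).comp_equiv e) he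
  exact ⟨inftyKnIsoOfFst δ hfst, hδ⟩

/-- Automorphisms `φ, ψ` of `∞·Kₙ` (n finite) with, for every finite `k` and every twist
type `t`, the same number of `k`-cycles of copies of twist type `t`, and the same number
of infinite cycles of copies, are conjugate in `Aut(∞·Kₙ)`. -/
theorem stmt10 (n : ℕ) [NeZero n] (φ ψ : inftyKn n ≃g inftyKn n)
    (σφ σψ : Equiv.Perm ℕ)
    (hφ : ∀ (i : ℕ) (a : Fin n), (φ (i, a)).1 = σφ i)
    (hψ : ∀ (i : ℕ) (a : Fin n), (ψ (i, a)).1 = σψ i)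
    (hfin : ∀ (k : ℕ), 0 < k → ∀ t : Equiv.Perm (Fin n),
      Cardinal.mk {O : Set ℕ // O ∈ cycles σφ ∧ hasTwistType n φ O k t} =
      Cardinal.mk {O : Set ℕ // O ∈ cycles σψ ∧ hasTwistType n ψ O k t})
    (hinf : Cardinal.mk {O : Set ℕ // O ∈ cycles σφ ∧ O.Infinite} =
      Cardinal.mk {O : Set ℕ // O ∈ cycles σψ ∧ O.Infinite}) :
    ∃ δ : inftyKn n ≃g inftyKn n, ∀ v, δ (φ v) = ψ (δ v) :=
  stmt10_general n φ ψ σφ σψ hφ hψ hfin hinf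
end

section
/- Let T be a countable tournament and let G be the directed graph on T × {0,1,2} defined by: (x,i) → (x,i+1 mod 3) for all x and i, and (x,i) → (y,j) for all i,j whenever x → y in T. Then G is a tournament, the map φ sending (x,i) to (x,i+1 mod 3) is an automorphism of G satisfying v → φ(v) for every vertex v, and the quotient of G by the orbit equivalence relation of φ (with the induced edge relation) is isomorphic to T. -/
def IsTournament {V : Type} (r : V → V → Prop) : Prop :=
  (∀ x, ¬ r x x) ∧ ∀ x y, x ≠ y → (r x y ↔ ¬ r y x)

def tripleEdge {V : Type} (r : V → V → Prop) (p q : V × ZMod 3) : Prop :=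
  (p.1 = q.1 ∧ q.2 = p.2 + 1) ∨ r p.1 q.1

lemma zmod3_ne : ∀ i : ZMod 3, i ≠ i + 1 := by decide

lemma zmod3_one (i j : ZMod 3) (h : i ≠ j) : (j = i + 1) ↔ ¬ (i = j + 1) := by
  revert i j; decide

def shiftEquiv (V : Type) : (V × ZMod 3) ≃ (V × ZMod 3) where
  toFun p := (p.1, p.2 + 1)
  invFun p := (p.1, p.2 - 1)
  left_inv p := by simp
  right_inv p := by simp

lemma shift_iter (V : Type) (m : ℕ) (p : V × ZMod 3) :
    (⇑(shiftEquiv V))^[m] p = (p.1, p.2 + m) := by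
  induction m with
  | zero => simp
  | succ n ih =>
    rw [Function.iterate_succ_apply', ih]
    refine Prod.ext rfl ?_
    show p.2 + (n : ZMod 3) + 1 = p.2 + ((n + 1 : ℕ) : ZMod 3)
    push_cast; ring

/-- The tripling construction: the tripled digraph `G` of a countable tournament `T` is a
tournament, the shift `φ(x,i) = (x,i+1)` is an automorphism of `G` with `v → φ(v)` for
every vertex `v`, its orbits are exactly the fibers `{x} × ZMod 3`, and the quotient of
`G` by the orbit equivalence relation (with the induced edge relation) is isomorphic to
`T`. -/
theorem stmt11 {V : Type} [Countable V] (r : V → V → Prop) (hT : IsTournament r) :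
    IsTournament (tripleEdge r) ∧
    (∃ φ : (V × ZMod 3) ≃ (V × ZMod 3),
      (∀ p, φ p = (p.1, p.2 + 1)) ∧
      (∀ p q, tripleEdge r p q ↔ tripleEdge r (φ p) (φ q)) ∧
      (∀ p, tripleEdge r p (φ p)) ∧
      (∀ p q, (∃ m : ℕ, (⇑φ)^[m] p = q) ↔ p.1 = q.1)) ∧
    (∀ (x y : V) (i j : ZMod 3), x ≠ y → (tripleEdge r (x, i) (y, j) ↔ r x y)) := by
  obtain ⟨hirr, hone⟩ := hT
  refine ⟨⟨?_, ?_⟩, ⟨shiftEquiv V, ?_, ?_, ?_, ?_⟩, ?_⟩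
  · rintro p (⟨-, h⟩ | h)
    · exact zmod3_ne p.2 h
    · exact hirr _ h
  · intro p q hpq
    by_cases hv : p.1 = q.1
    · have hij : p.2 ≠ q.2 := fun h => hpq (Prod.ext hv h)
      constructor
      · rintro (⟨-, h⟩ | h)
        · rintro (⟨-, h'⟩ | h')
          · exact ((zmod3_one _ _ hij).mp h) h'
          · exact hirr _ (hv ▸ h')
        · exact absurd (hv ▸ h) (hirr _)
      · intro h
        left
        refine ⟨hv, (zmod3_one _ _ hij).mpr fun h' => h (Or.inl ⟨hv.symm, h'⟩)⟩
    · constructor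
      · rintro (⟨h, -⟩ | h)
        · exact absurd h hv
        · rintro (⟨h', -⟩ | h')
          · exact hv h'.symm
          · exact ((hone _ _ hv).mp h) h'
      · intro h
        right
        exact (hone _ _ hv).mpr (fun hr => h (Or.inr hr))
  · intro p; rfl
  · intro p q
    simp only [tripleEdge, shiftEquiv, Equiv.coe_fn_mk]
    constructor
    · rintro (⟨h1, h2⟩ | h) <;> [exact Or.inl ⟨h1, by rw [h2]⟩; exact Or.inr h]
    · rintro (⟨h1, h2⟩ | h)
      · exact Or.inl ⟨h1, by exact add_right_cancel h2⟩
      · exact Or.inr h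
  · intro p; exact Or.inl ⟨rfl, rfl⟩
  · intro p q
    constructor
    · rintro ⟨m, hm⟩
      rw [shift_iter] at hm
      rw [Prod.ext_iff] at hm; exact hm.1
    · intro h
      refine ⟨(q.2 - p.2).val, ?_⟩
      rw [shift_iter, ZMod.natCast_val, ZMod.cast_id]
      exact Prod.ext h (by ring)
  · intro x y i j hxy
    constructor
    · rintro (⟨h, -⟩ | h)
      · exact absurd h hxy
      · exact h
    · exact Or.inr
end

section
/- Let G be a connected graph (or digraph) and n ≥ 1, and let n·G be the disjoint union of n copies of G. For φ ∈ Aut(G), let φ ⊕ id denote the automorphism of n·G acting by φ on the first copy and trivially on the others. Then for all φ, ψ ∈ Aut(G): φ and ψ are conjugate in Aut(G) if and only if φ ⊕ id and ψ ⊕ id are conjugate in Aut(n·G). -/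
/-!
An automorphism `Δ` of `n·G` permutes the copies of the connected graph `G`. If `Δ` conjugates
`φ ⊕ id` to `ψ ⊕ id` and maps the first copy to itself, its restriction to that copy conjugates
`φ` to `ψ`. Otherwise `Δ` carries the first copy onto a copy where `ψ ⊕ id` acts trivially, which
forces `φ = id`; applying the same argument to `Δ⁻¹` gives `ψ = id`.
-/

/-- The disjoint union `n·G` of `n` copies of the graph `G`, on vertex set `Fin n × V`. -/
def nCopies {V : Type} (G : SimpleGraph V) (n : ℕ) : SimpleGraph (Fin n × V) where
  Adj p q := p.1 = q.1 ∧ G.Adj p.2 q.2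
  symm := by constructor; intro p q h; exact ⟨h.1.symm, h.2.symm⟩
  loopless := by constructor; intro p h; exact G.irrefl h.2

/-- `φ ⊕ id`: the automorphism of `n·G` acting by `φ` on the first copy (index `0`)
and trivially on the other copies. -/
def oplusId {V : Type} {G : SimpleGraph V} {n : ℕ} [NeZero n] (φ : G ≃g G) :
    nCopies G n ≃g nCopies G n where
  toFun p := (p.1, if p.1 = 0 then φ p.2 else p.2)
  invFun p := (p.1, if p.1 = 0 then φ.symm p.2 else p.2)
  left_inv := by
    rintro ⟨i, x⟩
    by_cases h : i = 0 <;> simp [h]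
  right_inv := by
    rintro ⟨i, x⟩
    by_cases h : i = 0 <;> simp [h]
  map_rel_iff' := by
    rintro ⟨i, x⟩ ⟨j, y⟩
    by_cases h : i = 0 <;> by_cases h' : j = 0 <;>
      simp_all [nCopies, SimpleGraph.Adj]
    · exact φ.map_rel_iff
    · rintro rfl; exact absurd rfl h'

namespace nCopies

open Function

variable {V W : Type} {G : SimpleGraph V} {H : SimpleGraph W} {n m : ℕ}

@[simp]
lemma adj_iff {p q : Fin n × V} : (nCopies G n).Adj p q ↔ p.1 = q.1 ∧ G.Adj p.2 q.2 :=
  Iff.rfl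

lemma fst_hom_apply_eq (hG : G.Preconnected) (f : nCopies G n →g nCopies H m) (i : Fin n)
    (x y : V) : (f (i, x)).1 = (f (i, y)).1 := by
  obtain ⟨w⟩ := hG x y
  induction w with
  | nil => rfl
  | @cons u v _ hadj _ ih =>
    exact (f.map_adj (show (nCopies G n).Adj (i, u) (i, v) from ⟨rfl, hadj⟩)).1.trans ih

lemma fst_symm_apply_of_forall_fst_apply (hG : G.Preconnected) {e : nCopies G n ≃g nCopies G n}
    {i : Fin n} (he : ∀ x, (e (i, x)).1 = i) (y : V) : (e.symm (i, y)).1 = i := by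
  have hy : (i, (e (i, y)).2) = e (i, y) := Prod.ext (he y).symm rfl
  refine (fst_hom_apply_eq hG e.symm.toHom i y (e (i, y)).2).trans ?_
  simp [hy]

def restrictCopy (hG : G.Preconnected) (e : nCopies G n ≃g nCopies G n) (i : Fin n)
    (he : ∀ x, (e (i, x)).1 = i) : G ≃g G where
  toFun x := (e (i, x)).2
  invFun y := (e.symm (i, y)).2
  left_inv x := by
    simp only [show (i, (e (i, x)).2) = e (i, x) from Prod.ext (he x).symm rfl,
      RelIso.symm_apply_apply]
  right_inv y := by
    have hy : (i, (e.symm (i, y)).2) = e.symm (i, y) :=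
      Prod.ext (fst_symm_apply_of_forall_fst_apply hG he y).symm rfl
    simp only [hy, RelIso.apply_symm_apply]
  map_rel_iff' {a b} := by
    show G.Adj (e (i, a)).2 (e (i, b)).2 ↔ G.Adj a b
    simpa [he] using e.map_adj_iff (v := (i, a)) (w := (i, b))

lemma apply_eq_restrictCopy (hG : G.Preconnected) (e : nCopies G n ≃g nCopies G n) (i : Fin n)
    (he : ∀ x, (e (i, x)).1 = i) (x : V) : e (i, x) = (i, restrictCopy hG e i he x) :=
  Prod.ext (he x) rfl

variable [NeZero n]

@[simp]
lemma oplusId_apply_zero (φ : G ≃g G) (x : V) : oplusId φ ((0 : Fin n), x) = (0, φ x) := by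
  simp [oplusId]

lemma oplusId_apply_of_fst_ne_zero (φ : G ≃g G) {p : Fin n × V} (hp : p.1 ≠ 0) :
    oplusId φ p = p := by
  simp [oplusId, hp]

lemma semiconj_oplusId {φ ψ δ : G ≃g G} (h : Semiconj δ φ ψ) :
    Semiconj (oplusId δ : Fin n × V → Fin n × V) (oplusId φ) (oplusId ψ) := by
  rintro ⟨i, x⟩
  rcases eq_or_ne i 0 with rfl | hi
  · simp [h x]
  · simp [oplusId_apply_of_fst_ne_zero, hi]

lemma semiconj_restrictCopy (hG : G.Preconnected) {φ ψ : G ≃g G}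
    {Δ : nCopies G n ≃g nCopies G n} (hΔ : Semiconj Δ (oplusId φ) (oplusId ψ))
    (h0 : ∀ x, (Δ (0, x)).1 = 0) : Semiconj (restrictCopy hG Δ 0 h0) φ ψ := fun x => by
  simpa [apply_eq_restrictCopy hG Δ 0 h0] using hΔ (0, x)

lemma eq_self_of_semiconj_of_fst_ne_zero {φ ψ : G ≃g G} {Δ : nCopies G n ≃g nCopies G n}
    (hΔ : Semiconj Δ (oplusId φ) (oplusId ψ)) {x : V} (hx : (Δ (0, x)).1 ≠ 0) : φ x = x := by
  have h := hΔ (0, x)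
  rw [oplusId_apply_zero, oplusId_apply_of_fst_ne_zero ψ hx] at h
  exact congrArg Prod.snd (Δ.injective h)

lemma fst_symm_apply_ne_zero {Δ : nCopies G n ≃g nCopies G n}
    (h : ∀ x, (Δ (0, x)).1 ≠ 0) (y : V) : (Δ.symm (0, y)).1 ≠ 0 := fun hy => by
  apply h (Δ.symm (0, y)).2
  rw [show ((0 : Fin n), (Δ.symm (0, y)).2) = Δ.symm (0, y) from Prod.ext hy.symm rfl,
    RelIso.apply_symm_apply]

end nCopies

open nCopies in
/-- For a connected graph `G` and `n ≥ 1`, two automorphisms `φ, ψ` of `G` are conjugate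
in `Aut(G)` iff `φ ⊕ id` and `ψ ⊕ id` are conjugate in `Aut(n·G)`. -/
theorem stmt12 {V : Type} (G : SimpleGraph V) (hG : G.Connected) (n : ℕ) [NeZero n]
    (φ ψ : G ≃g G) :
    (∃ δ : G ≃g G, ∀ x, δ (φ x) = ψ (δ x)) ↔
    (∃ Δ : nCopies G n ≃g nCopies G n,
      ∀ p, Δ ((oplusId φ) p) = (oplusId ψ) (Δ p)) := by
  refine ⟨fun ⟨δ, hδ⟩ => ⟨oplusId δ, semiconj_oplusId hδ⟩, fun ⟨Δ, hΔ⟩ => ?_⟩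
  by_cases h0 : ∀ x, (Δ (0, x)).1 = 0
  · exact ⟨restrictCopy hG.preconnected Δ 0 h0, semiconj_restrictCopy hG.preconnected hΔ h0⟩
  · obtain ⟨x₀, hx₀⟩ := not_forall.mp h0
    have hne : ∀ x, (Δ (0, x)).1 ≠ 0 := fun x =>
      (fst_hom_apply_eq hG.preconnected Δ.toHom 0 x x₀).trans_ne hx₀
    have hφ x := eq_self_of_semiconj_of_fst_ne_zero hΔ (hne x)
    have hψ y := eq_self_of_semiconj_of_fst_ne_zero
      (Function.Semiconj.inverse_left hΔ Δ.left_inv Δ.right_inv) (fst_symm_apply_ne_zero hne y)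
    exact ⟨.refl, fun x => by simp [hφ x, hψ x]⟩
end

section
/- Let T be a tournament and n ≥ 1, and let T[n] be the digraph obtained from T by replacing each vertex with an independent set of size n, with (x,a) → (y,b) iff x → y in T. For φ ∈ Aut(T) let φ[n] be the automorphism of T[n] given by φ[n](x,a) = (φ(x),a). Then φ and ψ are conjugate in Aut(T) if and only if φ[n] and ψ[n] are conjugate in Aut(T[n]). -/
/-- The edge relation of `T[n]`: each vertex of `T` is replaced by an independent set of
size `n`, with `(x,a) → (y,b)` iff `x → y` in `T`. -/
def blowupEdge {V : Type} (r : V → V → Prop) (n : ℕ) (p q : V × Fin n) : Prop :=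
  r p.1 q.1

/-- An edge-preserving map on the blowup sends fibers to fibers. -/
lemma fiber_const {V : Type} {r : V → V → Prop} (hT : IsTournament r) {n : ℕ}
    (Δ : (V × Fin n) ≃ (V × Fin n))
    (hΔ : ∀ p q, blowupEdge r n p q ↔ blowupEdge r n (Δ p) (Δ q))
    (x : V) (a b : Fin n) : (Δ (x, a)).1 = (Δ (x, b)).1 := by
  by_contra hne
  have h1 : ¬ blowupEdge r n (Δ (x, a)) (Δ (x, b)) := by
    rw [← hΔ]; exact hT.1 x
  have h2 : ¬ blowupEdge r n (Δ (x, b)) (Δ (x, a)) := by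
    rw [← hΔ]; exact hT.1 x
  have := (hT.2 _ _ hne).mpr h2
  exact h1 this

/-- For a tournament `T` and `n ≥ 1`: `φ` and `ψ` are conjugate in `Aut(T)` iff the
automorphisms `φ[n]` and `ψ[n]` of `T[n]` (acting by `φ`, resp. `ψ`, on the fibers and
trivially within them) are conjugate in `Aut(T[n])`. -/
theorem stmt13 {V : Type} (r : V → V → Prop) (hT : IsTournament r) (n : ℕ) [NeZero n]
    (φ ψ : V ≃ V)
    (hφ : ∀ x y, r x y ↔ r (φ x) (φ y)) (hψ : ∀ x y, r x y ↔ r (ψ x) (ψ y)) :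
    (∃ δ : V ≃ V, (∀ x y, r x y ↔ r (δ x) (δ y)) ∧ ∀ x, δ (φ x) = ψ (δ x)) ↔
    (∃ Δ : (V × Fin n) ≃ (V × Fin n),
      (∀ p q, blowupEdge r n p q ↔ blowupEdge r n (Δ p) (Δ q)) ∧
      ∀ p : V × Fin n, Δ (φ p.1, p.2) = (ψ (Δ p).1, (Δ p).2)) := by
  constructor
  · rintro ⟨δ, hδ, hconj⟩
    refine ⟨Equiv.prodCongr δ (Equiv.refl _), ?_, ?_⟩
    · intro p q; exact hδ p.1 q.1
    · intro p; simp [hconj]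
  · rintro ⟨Δ, hΔ, hconj⟩
    have hΔ' : ∀ p q, blowupEdge r n (Δ.symm p) (Δ.symm q) ↔ blowupEdge r n p q := by
      intro p q
      conv_rhs => rw [← Δ.apply_symm_apply p, ← Δ.apply_symm_apply q]
      exact hΔ _ _
    set δ : V → V := fun x => (Δ (x, 0)).1 with hδdef
    set δ' : V → V := fun x => (Δ.symm (x, 0)).1 with hδ'def
    have key : ∀ x a, (Δ (x, a)).1 = δ x := fun x a => fiber_const hT Δ hΔ x a 0
    have key' : ∀ x a, (Δ.symm (x, a)).1 = δ' x := fun x a =>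
      fiber_const hT Δ.symm (fun p q => (hΔ' p q).symm) x a 0
    have left : ∀ x, δ' (δ x) = x := by
      intro x
      have := key' (δ x) (Δ (x, 0)).2
      rw [show ((δ x : V), (Δ (x, 0)).2) = Δ (x, 0) by
        rw [hδdef]] at this
      rw [Δ.symm_apply_apply] at this
      exact this.symm
    have right : ∀ x, δ (δ' x) = x := by
      intro x
      have := key (δ' x) (Δ.symm (x, 0)).2
      rw [show ((δ' x : V), (Δ.symm (x, 0)).2) = Δ.symm (x, 0) by
        rw [hδ'def]] at this
      rw [Δ.apply_symm_apply] at this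
      exact this.symm
    refine ⟨⟨δ, δ', left, right⟩, ?_, ?_⟩
    · intro x y
      have := hΔ (x, 0) (y, 0)
      simpa [blowupEdge, key] using this
    · intro x
      have := congrArg Prod.fst (hconj (x, 0))
      simpa [key] using this
end
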